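/- arXiv:2010.05614 — 2 statements merged into one kernel-verified Lean document; each statement's English description precedes it below -/
import Mathlib

section
/- Let d ≥ 1, h > 0, let a : ℝ^d → ℝ be C¹, bounded and nonnegative, and let u ∈ C_c^∞(ℝ^d; ℂ). Set f := P_h u = −h²Δu − u − i·h·div(a∇u), where div(a∇u) = ∇a·∇u + aΔu. Then Im ∫_{ℝ^d} f(x)·conj(u(x)) dx = h·∫_{ℝ^d} a(x)·‖∇u(x)‖² dx; equivalently, ∫_{ℝ^d} a(x)·‖h∇u(x)‖² dx = h·Im ∫_{ℝ^d} f·conj(u) dx. -/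
open MeasureTheory Complex ComplexConjugate

noncomputable section

/-- Partial derivative `∂u/∂xᵢ` of a complex-valued function on `ℝ^d`. -/
def pd {d : ℕ} (i : Fin d) (u : EuclideanSpace ℝ (Fin d) → ℂ)
    (x : EuclideanSpace ℝ (Fin d)) : ℂ :=
  fderiv ℝ u x (EuclideanSpace.single i (1 : ℝ))

/-- Laplacian `Δu = ∑ᵢ ∂²u/∂xᵢ²` of a complex-valued function on `ℝ^d`. -/
def lap {d : ℕ} (u : EuclideanSpace ℝ (Fin d) → ℂ)
    (x : EuclideanSpace ℝ (Fin d)) : ℂ :=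
  ∑ i : Fin d, pd i (pd i u) x

/-- The semiclassical Kelvin–Voigt operator
`P_h u = -h²Δu - u - i h (∇a·∇u + a Δu)`. -/
def Ph {d : ℕ} (h : ℝ) (a : EuclideanSpace ℝ (Fin d) → ℝ)
    (u : EuclideanSpace ℝ (Fin d) → ℂ) (x : EuclideanSpace ℝ (Fin d)) : ℂ :=
  -(h ^ 2 : ℂ) * lap u x - u x -
    Complex.I * (h : ℂ) *
      ((∑ i : Fin d, (fderiv ℝ a x (EuclideanSpace.single i (1 : ℝ)) : ℂ) * pd i u x) +
        (a x : ℂ) * lap u x)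

variable {d : ℕ}

lemma hcs_pd (i : Fin d) {u : EuclideanSpace ℝ (Fin d) → ℂ}
    (hs : HasCompactSupport u) : HasCompactSupport (pd i u) :=
  hs.fderiv_apply ℝ (EuclideanSpace.single i (1 : ℝ))

lemma contDiff_pd (i : Fin d) {u : EuclideanSpace ℝ (Fin d) → ℂ}
    (hu : ContDiff ℝ (⊤ : ℕ∞) u) : ContDiff ℝ (⊤ : ℕ∞) (pd i u) :=
  (hu.fderiv_right (by simp)).clm_apply contDiff_const

lemma continuous_pd (i : Fin d) {u : EuclideanSpace ℝ (Fin d) → ℂ}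
    (hu : ContDiff ℝ 1 u) : Continuous (pd i u) := by
  have : ContDiff ℝ 0 (pd i u) :=
    (hu.fderiv_right (by norm_num)).clm_apply contDiff_const
  exact this.continuous

lemma pd_conj (i : Fin d) {u : EuclideanSpace ℝ (Fin d) → ℂ}
    (x : EuclideanSpace ℝ (Fin d)) :
    pd i (fun y => (starRingEnd ℂ) (u y)) x = (starRingEnd ℂ) (pd i u x) := by
  have : (fun y => (starRingEnd ℂ) (u y)) = (Complex.conjCLE : ℂ → ℂ) ∘ u := rfl
  unfold pd
  rw [this, Complex.conjCLE.comp_fderiv]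
  rfl

lemma pd_ofReal (i : Fin d) {a : EuclideanSpace ℝ (Fin d) → ℝ}
    (ha : Differentiable ℝ a) (x : EuclideanSpace ℝ (Fin d)) :
    pd i (fun y => ((a y : ℂ))) x = ((fderiv ℝ a x (EuclideanSpace.single i (1 : ℝ)) : ℝ) : ℂ) := by
  have : (fun y => ((a y : ℂ))) = (Complex.ofRealCLM : ℝ → ℂ) ∘ a := rfl
  unfold pd
  rw [this, fderiv_comp x Complex.ofRealCLM.differentiableAt (ha x),
    Complex.ofRealCLM.fderiv]
  rfl

lemma pd_mul (i : Fin d) {f g : EuclideanSpace ℝ (Fin d) → ℂ}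
    (hf : Differentiable ℝ f) (hg : Differentiable ℝ g) (x : EuclideanSpace ℝ (Fin d)) :
    pd i (fun y => f y * g y) x = pd i f x * g x + f x * pd i g x := by
  unfold pd
  rw [fderiv_fun_mul (hf x) (hg x)]
  simp [mul_comm]
  ring

lemma ibp (i : Fin d) {F G : EuclideanSpace ℝ (Fin d) → ℂ}
    (hF : ContDiff ℝ 1 F) (hG : ContDiff ℝ 1 G) (hFs : HasCompactSupport F) :
    ∫ x, pd i F x * G x = -∫ x, F x * pd i G x := by
  have h1 : Integrable (fun x => pd i F x * G x) :=
    ((continuous_pd i hF).mul hG.continuous).integrable_of_hasCompactSupport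
      ((hcs_pd i hFs).mul_right)
  have h2 : Integrable (fun x => F x * pd i G x) :=
    (hF.continuous.mul (continuous_pd i hG)).integrable_of_hasCompactSupport
      (hFs.mul_right)
  have h3 : Integrable (fun x => F x * G x) :=
    (hF.continuous.mul hG.continuous).integrable_of_hasCompactSupport (hFs.mul_right)
  have := integral_mul_fderiv_eq_neg_fderiv_mul_of_integrable
    (f := F) (g := G) (v := EuclideanSpace.single i (1:ℝ)) (μ := volume)
    h1 h2 h3 (fun x _ => hF.differentiable one_ne_zero x) (fun x _ => hG.differentiable one_ne_zero x)
  unfold pd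
  rw [this, neg_neg]

/-- **Lemma 3.1 (2) of the paper**, on `ℝ^d` for compactly supported smooth `u`:
with `f = P_h u`, one has `Im ∫ f ū = h ∫ a ‖∇u‖²`; equivalently
`∫ a ‖h∇u‖² = h · Im ∫ f ū`. -/
theorem stmt_4 (d : ℕ) (hd : 1 ≤ d) (h : ℝ) (hh : 0 < h)
    (a : EuclideanSpace ℝ (Fin d) → ℝ) (haC1 : ContDiff ℝ 1 a)
    (habd : ∃ C, ∀ x, a x ≤ C) (hapos : ∀ x, 0 ≤ a x)
    (u : EuclideanSpace ℝ (Fin d) → ℂ) (hu : ContDiff ℝ (⊤ : ℕ∞) u)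
    (husupp : HasCompactSupport u) :
    ((∫ x, Ph h a u x * conj (u x)).im =
      h * ∫ x, a x * ∑ i : Fin d, ‖pd i u x‖ ^ 2) ∧
    (∫ x, a x * ∑ i : Fin d, ‖(h : ℂ) * pd i u x‖ ^ 2) =
      h * (∫ x, Ph h a u x * conj (u x)).im := by
  set cu : EuclideanSpace ℝ (Fin d) → ℂ := fun x => (starRingEnd ℂ) (u x) with hcu_def
  have hcu : ContDiff ℝ (⊤ : ℕ∞) cu := Complex.conjCLE.contDiff.comp hu
  have hcus : HasCompactSupport cu := husupp.comp_left (map_zero _)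
  set F : Fin d → EuclideanSpace ℝ (Fin d) → ℂ :=
    fun i x => ((a x : ℂ)) * pd i u x with hF_def
  have haC : ContDiff ℝ 1 (fun x => ((a x : ℂ))) :=
    Complex.ofRealCLM.contDiff.comp haC1
  have hFc1 : ∀ i, ContDiff ℝ 1 (F i) := fun i =>
    haC.mul ((contDiff_pd i hu).of_le (by simp))
  have hFs : ∀ i, HasCompactSupport (F i) := fun i => (hcs_pd i husupp).mul_left
  -- key identity (1)
  have key1 : ∀ i : Fin d, ∫ x, pd i (pd i u) x * cu x
      = -((∫ x, ‖pd i u x‖ ^ 2 : ℝ) : ℂ) := by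
    intro i
    rw [ibp i ((contDiff_pd i hu).of_le (by simp)) (hcu.of_le (by simp)) (hcs_pd i husupp)]
    congr 1
    have e : ∀ x, pd i u x * pd i cu x = ((‖pd i u x‖ ^ 2 : ℝ) : ℂ) := by
      intro x
      rw [hcu_def, pd_conj i x, Complex.mul_conj']
      norm_cast
    simp_rw [e]
    exact integral_ofReal
  -- key identity (2)
  have key2 : ∀ i : Fin d, ∫ x, pd i (F i) x * cu x
      = -((∫ x, a x * ‖pd i u x‖ ^ 2 : ℝ) : ℂ) := by
    intro i
    rw [ibp i (hFc1 i) (hcu.of_le (by simp)) (hFs i)]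
    congr 1
    have e : ∀ x, F i x * pd i cu x = ((a x * ‖pd i u x‖ ^ 2 : ℝ) : ℂ) := by
      intro x
      rw [hcu_def, pd_conj i x, hF_def]
      simp only
      rw [mul_assoc, Complex.mul_conj']
      norm_cast
    simp_rw [e]
    exact integral_ofReal
  -- key identity for u against cu
  have key0 : ∫ x, u x * cu x = ((∫ x, ‖u x‖ ^ 2 : ℝ) : ℂ) := by
    have e : ∀ x, u x * cu x = ((‖u x‖ ^ 2 : ℝ) : ℂ) := by
      intro x
      rw [hcu_def]
      simp only
      rw [Complex.mul_conj']
      norm_cast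
    simp_rw [e]
    exact integral_ofReal
  -- expansion of pd i (F i)
  have hFexp : ∀ (x) (i : Fin d), pd i (F i) x =
      ((fderiv ℝ a x (EuclideanSpace.single i (1:ℝ)) : ℝ) : ℂ) * pd i u x
        + (a x : ℂ) * pd i (pd i u) x := by
    intro x i
    rw [hF_def]
    rw [pd_mul i (haC.differentiable one_ne_zero)
      ((contDiff_pd i hu).differentiable (by simp)) x]
    rw [pd_ofReal i (haC1.differentiable one_ne_zero) x]
  -- pointwise expansion of the integrand
  have integrand_eq : ∀ x, Ph h a u x * cu x =
      (-(h^2 : ℂ)) * (∑ i : Fin d, pd i (pd i u) x * cu x)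
      + (-1 : ℂ) * (u x * cu x)
      + (-(Complex.I * (h:ℂ))) * (∑ i : Fin d, pd i (F i) x * cu x) := by
    intro x
    have hS : ∑ i : Fin d, pd i (F i) x =
        (∑ i : Fin d, ((fderiv ℝ a x (EuclideanSpace.single i (1:ℝ)) : ℝ) : ℂ) * pd i u x)
          + (a x : ℂ) * ∑ i : Fin d, pd i (pd i u) x := by
      rw [Finset.mul_sum, ← Finset.sum_add_distrib]
      exact Finset.sum_congr rfl fun i _ => hFexp x i
    rw [← Finset.sum_mul, ← Finset.sum_mul, hS]
    simp only [Ph, lap]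
    ring
  -- integrability facts
  have hc_pu : ∀ i : Fin d, Continuous (pd i u) := fun i =>
    continuous_pd i (hu.of_le (by simp))
  have hc_ppu : ∀ i : Fin d, Continuous (pd i (pd i u)) := fun i =>
    continuous_pd i ((contDiff_pd i hu).of_le (by simp))
  have hint1 : ∀ i : Fin d, Integrable (fun x => pd i (pd i u) x * cu x) := fun i =>
    ((hc_ppu i).mul hcu.continuous).integrable_of_hasCompactSupport hcus.mul_left
  have hint2 : Integrable (fun x => u x * cu x) :=
    (hu.continuous.mul hcu.continuous).integrable_of_hasCompactSupport hcus.mul_left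
  have hint3 : ∀ i : Fin d, Integrable (fun x => pd i (F i) x * cu x) := fun i =>
    ((continuous_pd i (hFc1 i)).mul hcu.continuous).integrable_of_hasCompactSupport
      hcus.mul_left
  -- the main integral identity
  have hintA : Integrable (fun x => (-(h^2 : ℂ)) * ∑ i : Fin d, pd i (pd i u) x * cu x) :=
    (integrable_finset_sum _ fun i _ => hint1 i).const_mul _
  have hintB : Integrable (fun x => (-1 : ℂ) * (u x * cu x)) := hint2.const_mul _
  have hintC : Integrable (fun x => (-(Complex.I * (h:ℂ))) * ∑ i : Fin d, pd i (F i) x * cu x) :=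
    (integrable_finset_sum _ fun i _ => hint3 i).const_mul _
  have hmain : ∫ x, Ph h a u x * cu x =
      (-(h^2 : ℂ)) * (∑ i : Fin d, ∫ x, pd i (pd i u) x * cu x)
      + (-1 : ℂ) * (∫ x, u x * cu x)
      + (-(Complex.I * (h:ℂ))) * (∑ i : Fin d, ∫ x, pd i (F i) x * cu x) := by
    have hintAB : Integrable (fun x => (-(h^2 : ℂ)) * (∑ i : Fin d, pd i (pd i u) x * cu x)
        + (-1 : ℂ) * (u x * cu x)) := hintA.add hintB
    simp_rw [integrand_eq]
    rw [integral_add hintAB hintC, integral_add hintA hintB,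
      integral_const_mul, integral_const_mul, integral_const_mul,
      integral_finset_sum _ (fun i _ => hint1 i),
      integral_finset_sum _ (fun i _ => hint3 i)]
  -- real integrals integrability (for combining sums)
  have hri2 : ∀ i : Fin d, Integrable (fun x => a x * (‖pd i u x‖ ^ 2 : ℝ)) := fun i =>
    (haC1.continuous.mul (((hc_pu i).norm).pow 2)).integrable_of_hasCompactSupport
      (by
        have hc : HasCompactSupport (fun x => ‖pd i u x‖ ^ 2) :=
          (hcs_pd i husupp).comp_left (g := fun z : ℂ => ‖z‖^2) (by simp)
        exact hc.mul_left)
  have hsum3 : ∫ x, a x * ∑ i : Fin d, ‖pd i u x‖ ^ 2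
      = ∑ i : Fin d, ∫ x, a x * ‖pd i u x‖ ^ 2 := by
    simp_rw [Finset.mul_sum]
    exact integral_finset_sum _ fun i _ => hri2 i
  have him : (∫ x, Ph h a u x * cu x).im
      = h * ∑ i : Fin d, ∫ x, a x * ‖pd i u x‖ ^ 2 := by
    rw [hmain, key0]
    simp_rw [key1, key2]
    simp [Complex.add_im, Complex.mul_im, ← Complex.ofReal_pow, Finset.mul_sum]
  constructor
  · rw [hsum3]
    exact him
  · have hpt : ∀ x, a x * ∑ i : Fin d, ‖(h : ℂ) * pd i u x‖ ^ 2
        = h^2 * (a x * ∑ i : Fin d, ‖pd i u x‖ ^ 2) := by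
      intro x
      have e : ∀ i : Fin d, ‖(h:ℂ) * pd i u x‖ ^ 2 = h^2 * ‖pd i u x‖^2 := by
        intro i
        rw [norm_mul, mul_pow, Complex.norm_real, Real.norm_eq_abs, abs_of_pos hh]
      simp_rw [e, ← Finset.mul_sum]
      ring
    simp_rw [hpt]
    rw [integral_const_mul, hsum3, him]
    ring


end
end

section
/- Let d ≥ 1 and j ≥ 1 an integer. There is a constant C = C(d) with the following property. Let C₀ > 0, h ∈ (0,1], and let b : ℝ^d × ℝ^d × ℝ^d → ℂ be measurable such that for each (x,y) the map ξ ↦ b(x,y,ξ) is C^{d+1}, is supported in the annulus {2^{j−1} ≤ ‖ξ‖ ≤ 2^{j+1}}, and satisfies |∂_ξ^α b(x,y,ξ)| ≤ C₀·⟨ξ⟩^{−(|α|+1)} for all |α| ≤ d+1. Then the operator T_h with kernel K_h satisfies ‖T_h f‖_{L²} ≤ C·C₀·2^{−j·d/(d+1)}·‖f‖_{L²} for every f ∈ L²(ℝ^d), uniformly in h ∈ (0,1]. -/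
/-!
Rescaling `ξ = 2^j η` turns `b(x,y,·)` into a symbol supported in `1/2 ≤ ‖η‖ ≤ 2` whose
derivatives of order `≤ d+1` are `O(C₀ 2^{-j})`. Integrating by parts `d+1` times in the Fourier
integral gives `|K_h(x,y)| ≲ C₀ 2^{-j} ρ^d (1 + ρ‖x-y‖)^{-(d+1)}` with `ρ = 2^j/(2πh)`: a bump of
`L¹`-mass `≲ C₀ 2^{-j}` whatever `h` is. Schur's test (Young's inequality `L¹ * L² → L²`) then
bounds the operator norm by `C₀ 2^{-j} ≤ C₀ 2^{-jd/(d+1)}`.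
-/

open MeasureTheory Complex Metric
open scoped ENNReal FourierTransform RealInnerProductSpace

noncomputable section

/-- The oscillatory-integral kernel
`K_h(x,y) = (2πh)^{-d} ∫ b(x,y,ξ) e^{i(x-y)·ξ/h} dξ`. -/
def Kker {d : ℕ} (h : ℝ)
    (b : EuclideanSpace ℝ (Fin d) → EuclideanSpace ℝ (Fin d) →
      EuclideanSpace ℝ (Fin d) → ℂ)
    (x y : EuclideanSpace ℝ (Fin d)) : ℂ :=
  ((2 * Real.pi * h : ℂ) ^ d)⁻¹ *
    ∫ ξ, b x y ξ * Complex.exp (Complex.I * ((inner ℝ (x - y) ξ : ℝ) : ℂ) / (h : ℂ))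

theorem lintegral_mul_sq_le {α : Type*} [MeasurableSpace α] {μ : Measure α} {w F : α → ℝ≥0∞}
    (hw : AEMeasurable w μ) (hF : AEMeasurable F μ) :
    (∫⁻ a, w a * F a ∂μ) ^ 2 ≤ (∫⁻ a, w a ∂μ) * ∫⁻ a, w a * F a ^ 2 ∂μ := by
  have hsqrt : ∀ x : ℝ≥0∞, (x ^ (1 / 2 : ℝ)) ^ 2 = x := fun x => by
    rw [← ENNReal.rpow_natCast, ← ENNReal.rpow_mul]; norm_num
  have hsplit : ∀ a, w a * F a = w a ^ (1 / 2 : ℝ) * (w a * F a ^ 2) ^ (1 / 2 : ℝ) := fun a => by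
    rw [ENNReal.mul_rpow_of_nonneg _ _ (by norm_num), ← ENNReal.rpow_natCast, ← ENNReal.rpow_mul,
      ← mul_assoc, ← ENNReal.rpow_add_of_nonneg _ _ (by norm_num) (by norm_num)]
    norm_num
  calc (∫⁻ a, w a * F a ∂μ) ^ 2
      ≤ ((∫⁻ a, w a ∂μ) ^ (1 / 2 : ℝ) * (∫⁻ a, w a * F a ^ 2 ∂μ) ^ (1 / 2 : ℝ)) ^ 2 := by
        simp_rw [hsplit]
        gcongr
        exact ENNReal.lintegral_mul_norm_pow_le hw (hw.mul (hF.pow_const 2)) (by norm_num)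
          (by norm_num) (by norm_num)
    _ = (∫⁻ a, w a ∂μ) * ∫⁻ a, w a * F a ^ 2 ∂μ := by rw [mul_pow, hsqrt, hsqrt]

section Young

variable {G : Type*} [MeasurableSpace G] [AddCommGroup G] [MeasurableAdd₂ G] [MeasurableNeg G]
  {μ : Measure G} [SFinite μ] [μ.IsAddLeftInvariant] [μ.IsNegInvariant] {A F : G → ℝ≥0∞}

theorem lintegral_sq_lintegral_sub_mul_le (hA : Measurable A) (hF : AEMeasurable F μ) :
    ∫⁻ x, (∫⁻ y, A (x - y) * F y ∂μ) ^ 2 ∂μ ≤ (∫⁻ z, A z ∂μ) ^ 2 * ∫⁻ y, F y ^ 2 ∂μ := by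
  have hprod : AEMeasurable (fun p : G × G => A (p.1 - p.2) * F p.2 ^ 2) (μ.prod μ) :=
    (hA.comp measurable_sub).aemeasurable.mul (hF.pow_const 2).comp_snd
  have hswap : ∀ y, ∫⁻ x, A (x - y) * F y ^ 2 ∂μ = (∫⁻ z, A z ∂μ) * F y ^ 2 := fun y => by
    rw [lintegral_mul_const'' (f := fun x => A (x - y)) _
        (hA.comp (measurable_sub_const y)).aemeasurable,
      lintegral_sub_right_eq_self A]
  calc ∫⁻ x, (∫⁻ y, A (x - y) * F y ∂μ) ^ 2 ∂μ
      ≤ ∫⁻ x, (∫⁻ z, A z ∂μ) * ∫⁻ y, A (x - y) * F y ^ 2 ∂μ ∂μ := by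
        refine lintegral_mono fun x => ?_
        rw [← lintegral_sub_left_eq_self A x]
        exact lintegral_mul_sq_le (hA.comp (measurable_const.sub measurable_id)).aemeasurable hF
    _ = (∫⁻ z, A z ∂μ) * ∫⁻ y, ∫⁻ x, A (x - y) * F y ^ 2 ∂μ ∂μ := by
        rw [lintegral_const_mul'' _ hprod.lintegral_prod_right', lintegral_lintegral_swap hprod]
    _ = (∫⁻ z, A z ∂μ) ^ 2 * ∫⁻ y, F y ^ 2 ∂μ := by
        simp_rw [hswap, lintegral_const_mul'' _ (hF.pow_const 2), sq, mul_assoc]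

theorem eLpNorm_lintegral_sub_mul_le (hA : Measurable A) (hF : AEMeasurable F μ) :
    eLpNorm (fun x => ∫⁻ y, A (x - y) * F y ∂μ) 2 μ ≤ (∫⁻ z, A z ∂μ) * eLpNorm F 2 μ := by
  simp only [eLpNorm_eq_lintegral_rpow_enorm_toReal two_ne_zero ENNReal.ofNat_ne_top,
    ENNReal.toReal_ofNat, enorm_eq_self, ENNReal.rpow_two]
  have hsqrt : (∫⁻ z, A z ∂μ) = ((∫⁻ z, A z ∂μ) ^ 2) ^ (1 / 2 : ℝ) := by
    rw [← ENNReal.rpow_natCast, ← ENNReal.rpow_mul]; norm_num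
  rw [hsqrt, ← ENNReal.mul_rpow_of_nonneg _ _ (by norm_num)]
  exact ENNReal.rpow_le_rpow (lintegral_sq_lintegral_sub_mul_le hA hF) (by norm_num)

theorem eLpNorm_integral_mul_le_of_enorm_le {K : G → G → ℂ} {f : G → ℂ} (hA : Measurable A)
    (hK : ∀ x y, ‖K x y‖ₑ ≤ A (x - y)) (hf : AEStronglyMeasurable f μ) :
    eLpNorm (fun x => ∫ y, K x y * f y ∂μ) 2 μ ≤ (∫⁻ z, A z ∂μ) * eLpNorm f 2 μ := by
  calc eLpNorm (fun x => ∫ y, K x y * f y ∂μ) 2 μ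
      ≤ eLpNorm (fun x => ∫⁻ y, A (x - y) * ‖f y‖ₑ ∂μ) 2 μ := by
        refine eLpNorm_mono_enorm fun x => ?_
        rw [enorm_eq_self]
        refine (enorm_integral_le_lintegral_enorm _).trans (lintegral_mono fun y => ?_)
        rw [enorm_mul]
        exact mul_le_mul_left (hK x y) _
    _ ≤ (∫⁻ z, A z ∂μ) * eLpNorm f 2 μ := by
        rw [← eLpNorm_enorm f]
        exact eLpNorm_lintegral_sub_mul_le hA hf.enorm

end Young

theorem one_add_sq_rpow_neg_le {a t : ℝ} (ha : 0 < a) (hat : a ≤ t) (k : ℕ) :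
    (1 + t ^ 2) ^ (-((k : ℝ) + 1) / 2) ≤ (a ^ (k + 1))⁻¹ := by
  have hpow : (t ^ 2) ^ (((k : ℝ) + 1) / 2) = t ^ (k + 1) := by
    rw [← Real.rpow_natCast t 2, ← Real.rpow_mul (ha.trans_le hat).le, ← Real.rpow_natCast]
    push_cast; ring_nf
  rw [neg_div, Real.rpow_neg (by positivity)]
  gcongr
  calc a ^ (k + 1) ≤ t ^ (k + 1) := by gcongr
    _ = (t ^ 2) ^ (((k : ℝ) + 1) / 2) := hpow.symm
    _ ≤ (1 + t ^ 2) ^ (((k : ℝ) + 1) / 2) := by gcongr; linarith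

theorem one_add_pow_mul_le {a t M : ℝ} (N : ℕ) (ht : 0 ≤ t) (ha : 0 ≤ a) (haM : a ≤ M)
    (htaM : t ^ N * a ≤ M) : (1 + t) ^ N * a ≤ 2 ^ N * M := by
  rcases le_total t 1 with ht1 | ht1
  · gcongr; linarith
  · calc (1 + t) ^ N * a ≤ (2 * t) ^ N * a := by gcongr; linarith
      _ = 2 ^ N * (t ^ N * a) := by ring
      _ ≤ 2 ^ N * M := by gcongr

theorem inv_two_pow_le_two_rpow (j d : ℕ) :
    ((2 : ℝ) ^ j)⁻¹ ≤ 2 ^ (-((j : ℝ) * d) / ((d : ℝ) + 1)) := by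
  rw [← Real.rpow_natCast, ← Real.rpow_neg zero_le_two]
  refine Real.rpow_le_rpow_of_exponent_le one_le_two ?_
  rw [neg_div, neg_le_neg_iff, div_le_iff₀ (by positivity)]
  nlinarith [j.cast_nonneg (α := ℝ)]

section Rescaling

variable {V E : Type*} [NormedAddCommGroup V] [NormedSpace ℝ V] [NormedAddCommGroup E]
  [NormedSpace ℝ E]

theorem norm_iteratedFDeriv_comp_smul_le {g : V → E} {n : WithTop ℕ∞} (hg : ContDiff ℝ n g)
    (a : ℝ) {m : ℕ} (hm : m ≤ n) (η : V) :
    ‖iteratedFDeriv ℝ m (fun v => g (a • v)) η‖ ≤ |a| ^ m * ‖iteratedFDeriv ℝ m g (a • η)‖ := by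
  set L : V →L[ℝ] V := a • ContinuousLinearMap.id ℝ V
  have hL : ‖L‖ ≤ |a| :=
    ContinuousLinearMap.opNorm_le_bound _ (abs_nonneg a) fun v => by simp [L, norm_smul]
  have hcomp := L.iteratedFDeriv_comp_right hg η hm
  simp only [Function.comp_def] at hcomp
  change ‖iteratedFDeriv ℝ m (fun v => g (L v)) η‖ ≤ _
  rw [hcomp]
  refine (ContinuousMultilinearMap.norm_compContinuousLinearMap_le _ _).trans ?_
  rw [mul_comm]
  gcongr
  · simpa using pow_le_pow_left₀ (norm_nonneg _) hL m
  · exact le_rfl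

theorem norm_iteratedFDeriv_comp_smul_le_of_annulus {g : V → E} {N : ℕ} (hg : ContDiff ℝ N g)
    {lam C₀ : ℝ} (hlam : 0 < lam) (hsupp : ∀ ξ, g ξ ≠ 0 → lam / 2 ≤ ‖ξ‖)
    (hder : ∀ ξ, ∀ k ≤ N, ‖iteratedFDeriv ℝ k g ξ‖ ≤ C₀ * (1 + ‖ξ‖ ^ 2) ^ (-((k : ℝ) + 1) / 2))
    {m : ℕ} (hm : m ≤ N) (η : V) :
    ‖iteratedFDeriv ℝ m (fun v => g (lam • v)) η‖ ≤ 2 ^ (N + 1) * C₀ / lam := by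
  have hC₀ : 0 ≤ C₀ := nonneg_of_mul_nonneg_left ((norm_nonneg _).trans (hder 0 0 (Nat.zero_le _)))
    (by positivity)
  refine (norm_iteratedFDeriv_comp_smul_le hg lam (by exact_mod_cast hm) η).trans ?_
  rw [abs_of_pos hlam]
  by_cases hzero : iteratedFDeriv ℝ m g (lam • η) = 0
  · rw [hzero, norm_zero, mul_zero]; positivity
  have hclosed : IsClosed {ξ : V | lam / 2 ≤ ‖ξ‖} := isClosed_le continuous_const continuous_norm
  have hlarge : lam / 2 ≤ ‖lam • η‖ :=
    hclosed.closure_subset_iff.2 hsupp (support_iteratedFDeriv_subset m hzero)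
  calc lam ^ m * ‖iteratedFDeriv ℝ m g (lam • η)‖
      ≤ lam ^ m * (C₀ * ((lam / 2) ^ (m + 1))⁻¹) := by
        gcongr
        exact (hder _ m hm).trans (by gcongr; exact one_add_sq_rpow_neg_le (by positivity) hlarge m)
    _ = 2 ^ (m + 1) * C₀ / lam := by rw [div_pow, pow_succ lam, pow_succ 2]; field_simp
    _ ≤ 2 ^ (N + 1) * C₀ / lam := by gcongr; norm_num

end Rescaling

/-- `4 ^ N * (N + 1)` comes from `N` integrations by parts in the Fourier integral, `2 ^ (N + 1)`
from the symbol bounds after rescaling the annulus, and the volume from its support ball. -/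
def symbolDecayConst (V : Type*) [NormedAddCommGroup V] [InnerProductSpace ℝ V]
    [FiniteDimensional ℝ V] [MeasurableSpace V] [BorelSpace V] (N : ℕ) : ℝ :=
  4 ^ N * (N + 1) * 2 ^ (N + 1) * volume.real (closedBall (0 : V) 2)

theorem symbolDecayConst_pos (V : Type*) [NormedAddCommGroup V] [InnerProductSpace ℝ V]
    [FiniteDimensional ℝ V] [MeasurableSpace V] [BorelSpace V] (N : ℕ) :
    0 < symbolDecayConst V N := by
  have hvol : 0 < volume.real (closedBall (0 : V) 2) :=
    ENNReal.toReal_pos (measure_closedBall_pos volume 0 two_pos).ne' measure_closedBall_lt_top.ne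
  unfold symbolDecayConst
  positivity

section Fourier

variable {V E : Type*} [NormedAddCommGroup V] [InnerProductSpace ℝ V] [FiniteDimensional ℝ V]
  [MeasurableSpace V] [BorelSpace V] [NormedAddCommGroup E] [NormedSpace ℂ E]

theorem Real.fourier_comp_smul (f : V → E) {a : ℝ} (ha : a ≠ 0) (w : V) :
    𝓕 (fun v => f (a • v)) w = |(a ^ Module.finrank ℝ V)⁻¹| • 𝓕 f (a⁻¹ • w) := by
  simp only [Real.fourier_eq]
  rw [← Measure.integral_comp_smul volume (fun u => 𝐞 (-⟪u, a⁻¹ • w⟫) • f u) a]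
  congr! 4 with v
  rw [inner_smul_left, inner_smul_right, RCLike.conj_to_real, ← mul_assoc, mul_inv_cancel₀ ha,
    one_mul]

theorem Real.integral_mul_exp_inner_div_eq_fourier (g : V → ℂ) (v : V) (h : ℝ) :
    ∫ ξ, g ξ * Complex.exp (Complex.I * ((⟪v, ξ⟫ : ℝ) : ℂ) / (h : ℂ)) =
      𝓕 g (-(2 * Real.pi * h)⁻¹ • v) := by
  rw [Real.fourier_eq']
  congr 1 with ξ
  rw [smul_eq_mul, mul_comm, inner_smul_right, real_inner_comm]
  congr 2
  have hπ : (Real.pi : ℂ) ≠ 0 := by exact_mod_cast Real.pi_ne_zero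
  push_cast
  field_simp

theorem integral_norm_iteratedFDeriv_le {f : V → E} {R M : ℝ} (hsupp : tsupport f ⊆ closedBall 0 R)
    {n : ℕ} (hM : ∀ x, ‖iteratedFDeriv ℝ n f x‖ ≤ M) :
    ∫ x, ‖iteratedFDeriv ℝ n f x‖ ≤ volume.real (closedBall (0 : V) R) * M := by
  have hind : Integrable ((closedBall (0 : V) R).indicator fun _ => M) :=
    (integrable_indicator_iff measurableSet_closedBall).2
      (integrableOn_const measure_closedBall_lt_top.ne)
  calc ∫ x, ‖iteratedFDeriv ℝ n f x‖
      ≤ ∫ x, (closedBall (0 : V) R).indicator (fun _ => M) x := by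
        refine integral_mono_of_nonneg (.of_forall fun x => norm_nonneg _) hind
          (.of_forall fun x => ?_)
        by_cases hx : x ∈ closedBall (0 : V) R
        · simpa [hx] using hM x
        · have : iteratedFDeriv ℝ n f x = 0 :=
            Function.notMem_support.1 fun h => hx (hsupp (support_iteratedFDeriv_subset n h))
          simp [hx, this]
    _ = volume.real (closedBall (0 : V) R) * M := by
        rw [integral_indicator_const _ measurableSet_closedBall, smul_eq_mul]

theorem pow_mul_norm_fourier_le_of_integral_le {f : V → E} {N : ℕ} (hf : ContDiff ℝ N f)
    (hint : ∀ n ≤ N, Integrable (iteratedFDeriv ℝ n f)) {I : ℝ}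
    (hI : ∀ n ≤ N, ∫ x, ‖iteratedFDeriv ℝ n f x‖ ≤ I) (w : V) :
    ‖w‖ ^ N * ‖𝓕 f w‖ ≤ 2 ^ N * ((N + 1) * I) := by
  have hint' : ∀ k n : ℕ, (k : ℕ∞) ≤ 0 → (n : ℕ∞) ≤ N →
      Integrable (fun v => ‖v‖ ^ k * ‖iteratedFDeriv ℝ n f v‖) := fun k n hk hn => by
    obtain rfl : k = 0 := by exact_mod_cast nonpos_iff_eq_zero.1 hk
    simpa using (hint n (by exact_mod_cast hn)).norm
  have hsum : ∑ p ∈ Finset.range 1 ×ˢ Finset.range (N + 1),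
      ∫ v, ‖v‖ ^ p.1 * ‖iteratedFDeriv ℝ p.2 f v‖ ≤ (N + 1) * I := by
    calc _ ≤ ∑ _p ∈ Finset.range 1 ×ˢ Finset.range (N + 1), I := by
          refine Finset.sum_le_sum fun p hp => ?_
          simp only [Finset.mem_product, Finset.mem_range] at hp
          simpa [Nat.lt_one_iff.1 hp.1] using hI p.2 (Nat.lt_succ_iff.1 hp.2)
      _ = (N + 1) * I := by simp
  have hfourier := Real.pow_mul_norm_iteratedFDeriv_fourier_le hf hint' le_rfl le_rfl w
  simp only [norm_iteratedFDeriv_zero, pow_zero, one_mul, CharP.cast_eq_zero, mul_zero,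
    zero_add] at hfourier
  exact hfourier.trans (by gcongr)

theorem norm_fourier_le_of_norm_iteratedFDeriv_le {f : V → E} {N : ℕ} (hf : ContDiff ℝ N f)
    {R M : ℝ} (hsupp : Function.support f ⊆ closedBall 0 R)
    (hM : ∀ n ≤ N, ∀ x, ‖iteratedFDeriv ℝ n f x‖ ≤ M) (w : V) :
    ‖𝓕 f w‖ ≤ 4 ^ N * (N + 1) * volume.real (closedBall (0 : V) R) * M / (1 + ‖w‖) ^ N := by
  have hts : tsupport f ⊆ closedBall 0 R := isClosed_closedBall.closure_subset_iff.2 hsupp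
  have hcs : HasCompactSupport f :=
    (isCompact_closedBall 0 R).of_isClosed_subset isClosed_closure hts
  have hint : ∀ n ≤ N, Integrable (iteratedFDeriv ℝ n f) := fun n hn =>
    (hf.continuous_iteratedFDeriv (by exact_mod_cast hn)).integrable_of_hasCompactSupport
      (hcs.iteratedFDeriv n)
  set I := volume.real (closedBall (0 : V) R) * M
  have hI : ∀ n ≤ N, ∫ x, ‖iteratedFDeriv ℝ n f x‖ ≤ I := fun n hn =>
    integral_norm_iteratedFDeriv_le hts (hM n hn)
  have h0 : ‖𝓕 f w‖ ≤ I := by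
    refine (VectorFourier.norm_fourierIntegral_le_integral_norm _ _ _ f w).trans ?_
    simpa using hI 0 (Nat.zero_le _)
  have hI_le : I ≤ 2 ^ N * ((N + 1) * I) := by
    have hI0 : 0 ≤ I := (norm_nonneg _).trans h0
    have h2N : (1 : ℝ) ≤ 2 ^ N := one_le_pow₀ one_le_two
    have hN1 : (1 : ℝ) ≤ N + 1 := by linarith [N.cast_nonneg (α := ℝ)]
    calc I = 1 * (1 * I) := by ring
      _ ≤ _ := by gcongr
  rw [le_div_iff₀ (by positivity), mul_comm]
  calc (1 + ‖w‖) ^ N * ‖𝓕 f w‖ ≤ 2 ^ N * (2 ^ N * ((N + 1) * I)) :=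
        one_add_pow_mul_le N (norm_nonneg w) (norm_nonneg _) (h0.trans hI_le)
          (pow_mul_norm_fourier_le_of_integral_le hf hint hI w)
    _ = _ := by rw [show (4 : ℝ) ^ N = 2 ^ N * 2 ^ N by rw [← mul_pow]; norm_num]; ring

/-- The dilation `ξ = lam • η` moves the annulus to `1/2 ≤ ‖η‖ ≤ 2`, where the symbol bounds
become uniform `O(C₀ / lam)` bounds on all derivatives of order `≤ N`. -/
theorem norm_fourier_le_of_annulus {g : V → E} {N : ℕ} (hg : ContDiff ℝ N g) {lam C₀ : ℝ}
    (hlam : 0 < lam) (hsupp : ∀ ξ, g ξ ≠ 0 → lam / 2 ≤ ‖ξ‖ ∧ ‖ξ‖ ≤ 2 * lam)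
    (hder : ∀ ξ, ∀ k ≤ N, ‖iteratedFDeriv ℝ k g ξ‖ ≤ C₀ * (1 + ‖ξ‖ ^ 2) ^ (-((k : ℝ) + 1) / 2))
    (w : V) :
    ‖𝓕 g w‖ ≤ lam ^ Module.finrank ℝ V * (symbolDecayConst V N * C₀ / lam) /
      (1 + lam * ‖w‖) ^ N := by
  have hdil : 𝓕 g w = lam ^ Module.finrank ℝ V • 𝓕 (fun v => g (lam • v)) (lam • w) := by
    rw [Real.fourier_comp_smul g hlam.ne', inv_smul_smul₀ hlam.ne', abs_of_pos (by positivity),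
      smul_smul, mul_inv_cancel₀ (by positivity), one_smul]
  have hsupp' : Function.support (fun v => g (lam • v)) ⊆ closedBall 0 2 := fun η hη => by
    have hle := (hsupp _ hη).2
    rw [norm_smul, Real.norm_of_nonneg hlam.le] at hle
    rw [mem_closedBall_zero_iff]
    nlinarith
  have hdecay := norm_fourier_le_of_norm_iteratedFDeriv_le (hg.comp (contDiff_const_smul lam))
    hsupp' (fun m hm => norm_iteratedFDeriv_comp_smul_le_of_annulus hg hlam
      (fun ξ hξ => (hsupp ξ hξ).1) hder hm) (lam • w)
  rw [norm_smul, Real.norm_of_nonneg hlam.le] at hdecay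
  rw [hdil, norm_smul, Real.norm_of_nonneg (by positivity), mul_div_assoc]
  gcongr
  refine hdecay.trans_eq ?_
  unfold symbolDecayConst
  ring

end Fourier

section Profile

variable {V : Type*} [NormedAddCommGroup V] [NormedSpace ℝ V] [FiniteDimensional ℝ V]
  [MeasurableSpace V] [BorelSpace V] (μ : Measure V) [μ.IsAddHaarMeasure] {N : ℕ}

theorem integrable_one_div_one_add_norm_pow (hN : Module.finrank ℝ V < N) :
    Integrable (fun z : V => 1 / (1 + ‖z‖) ^ N) μ := by
  refine (integrable_one_add_norm (μ := μ) (r := N) (by exact_mod_cast hN)).congr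
    (.of_forall fun z => ?_)
  simp only [Real.rpow_neg (by positivity : (0 : ℝ) ≤ 1 + ‖z‖), Real.rpow_natCast, one_div]

theorem integral_one_div_one_add_norm_pow_pos (hN : Module.finrank ℝ V < N) :
    0 < ∫ z, 1 / (1 + ‖z‖) ^ N ∂μ := by
  rw [integral_pos_iff_support_of_nonneg (fun z => by positivity)
      (integrable_one_div_one_add_norm_pow μ hN),
    Function.support_eq_univ fun z => by positivity]
  exact Measure.measure_univ_pos.2 (NeZero.ne μ)

theorem lintegral_ofReal_mul_pow_div_one_add_mul_norm_pow (hN : Module.finrank ℝ V < N)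
    {c ρ : ℝ} (hc : 0 ≤ c) (hρ : 0 < ρ) :
    ∫⁻ z, ENNReal.ofReal (c * (ρ ^ Module.finrank ℝ V / (1 + ρ * ‖z‖) ^ N)) ∂μ =
      ENNReal.ofReal (c * ∫ z, 1 / (1 + ‖z‖) ^ N ∂μ) := by
  have hscale : ∀ z : V, ρ ^ Module.finrank ℝ V / (1 + ρ * ‖z‖) ^ N =
      ρ ^ Module.finrank ℝ V * (1 / (1 + ‖ρ • z‖) ^ N) := fun z => by
    rw [norm_smul, Real.norm_of_nonneg hρ.le, mul_one_div]
  simp_rw [hscale]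
  rw [← ofReal_integral_eq_lintegral_ofReal
      ((((integrable_one_div_one_add_norm_pow μ hN).comp_smul hρ.ne').const_mul _).const_mul c)
      (.of_forall fun z => by positivity),
    integral_const_mul, integral_const_mul,
    Measure.integral_comp_smul_of_nonneg μ (fun z : V => 1 / (1 + ‖z‖) ^ N) ρ (hR := hρ.le),
    smul_eq_mul, ← mul_assoc _ _⁻¹, mul_inv_cancel₀ (by positivity), one_mul]

end Profile

theorem norm_Kker_le {d N : ℕ}
    {b : EuclideanSpace ℝ (Fin d) → EuclideanSpace ℝ (Fin d) → EuclideanSpace ℝ (Fin d) → ℂ}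
    {h lam C₀ : ℝ} (hh : 0 < h) (hlam : 0 < lam) {x y : EuclideanSpace ℝ (Fin d)}
    (hb : ContDiff ℝ N (b x y)) (hsupp : ∀ ξ, b x y ξ ≠ 0 → lam / 2 ≤ ‖ξ‖ ∧ ‖ξ‖ ≤ 2 * lam)
    (hder : ∀ ξ, ∀ k ≤ N,
      ‖iteratedFDeriv ℝ k (b x y) ξ‖ ≤ C₀ * (1 + ‖ξ‖ ^ 2) ^ (-((k : ℝ) + 1) / 2)) :
    ‖Kker h b x y‖ ≤ symbolDecayConst (EuclideanSpace ℝ (Fin d)) N * C₀ / lam *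
      ((lam / (2 * Real.pi * h)) ^ d / (1 + lam / (2 * Real.pi * h) * ‖x - y‖) ^ N) := by
  have h2πh : 0 < 2 * Real.pi * h := by positivity
  have hdecay := norm_fourier_le_of_annulus hb hlam hsupp hder (-(2 * Real.pi * h)⁻¹ • (x - y))
  rw [finrank_euclideanSpace_fin, norm_smul, norm_neg, norm_inv,
    Real.norm_of_nonneg h2πh.le] at hdecay
  have hnorm : ‖((2 * Real.pi * h : ℂ) ^ d)⁻¹‖ = ((2 * Real.pi * h) ^ d)⁻¹ := by
    rw [norm_inv, norm_pow, ← Complex.ofReal_ofNat, ← Complex.ofReal_mul, ← Complex.ofReal_mul,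
      Complex.norm_real, Real.norm_of_nonneg h2πh.le]
  rw [Kker, norm_mul, hnorm, Real.integral_mul_exp_inner_div_eq_fourier]
  calc ((2 * Real.pi * h) ^ d)⁻¹ * ‖𝓕 (b x y) (-(2 * Real.pi * h)⁻¹ • (x - y))‖
      ≤ ((2 * Real.pi * h) ^ d)⁻¹ * (lam ^ d * (symbolDecayConst _ N * C₀ / lam) /
          (1 + lam * ((2 * Real.pi * h)⁻¹ * ‖x - y‖)) ^ N) := by gcongr
    _ = _ := by rw [div_pow]; field_simp

theorem stmt_11_general (d : ℕ) :
    ∃ C : ℝ, 0 < C ∧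
      ∀ j : ℕ, 1 ≤ j →
      ∀ (C₀ h : ℝ), 0 < C₀ → 0 < h → h ≤ 1 →
      ∀ b : EuclideanSpace ℝ (Fin d) → EuclideanSpace ℝ (Fin d) →
          EuclideanSpace ℝ (Fin d) → ℂ,
        (∀ x y, ContDiff ℝ (d + 1 : ℕ) (b x y)) →
        (∀ x y ξ, b x y ξ ≠ 0 → (2 : ℝ) ^ (j - 1) ≤ ‖ξ‖ ∧ ‖ξ‖ ≤ (2 : ℝ) ^ (j + 1)) →
        (∀ x y ξ, ∀ k : ℕ, k ≤ d + 1 →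
          ‖iteratedFDeriv ℝ k (b x y) ξ‖ ≤
            C₀ * (1 + ‖ξ‖ ^ 2) ^ (-((k : ℝ) + 1) / 2)) →
        ∀ f : EuclideanSpace ℝ (Fin d) → ℂ, MemLp f 2 volume →
          eLpNorm (fun x => ∫ y, Kker h b x y * f y) 2 volume ≤
            ENNReal.ofReal (C * C₀ * (2 : ℝ) ^ (-((j : ℝ) * d) / ((d : ℝ) + 1))) *
              eLpNorm f 2 volume := by
  have hdN : Module.finrank ℝ (EuclideanSpace ℝ (Fin d)) < d + 1 := by
    rw [finrank_euclideanSpace_fin]; omega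
  set K := symbolDecayConst (EuclideanSpace ℝ (Fin d)) (d + 1)
  set Iq := ∫ z : EuclideanSpace ℝ (Fin d), 1 / (1 + ‖z‖) ^ (d + 1)
  have hK : 0 < K := symbolDecayConst_pos _ _
  have hIq : 0 < Iq := integral_one_div_one_add_norm_pow_pos volume hdN
  refine ⟨K * Iq, by positivity, ?_⟩
  intro j hj C₀ h hC₀ hh _ b hb hbsupp hbder f hf
  set lam : ℝ := 2 ^ j
  set ρ := lam / (2 * Real.pi * h)
  set A : EuclideanSpace ℝ (Fin d) → ℝ≥0∞ :=
    fun z => ENNReal.ofReal (K * C₀ / lam * (ρ ^ d / (1 + ρ * ‖z‖) ^ (d + 1)))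
  have hann : ∀ x y ξ, b x y ξ ≠ 0 → lam / 2 ≤ ‖ξ‖ ∧ ‖ξ‖ ≤ 2 * lam := fun x y ξ hξ => by
    have hsplit : lam = 2 ^ (j - 1) * 2 := by rw [← pow_succ, Nat.sub_add_cancel hj]
    obtain ⟨hlo, hhi⟩ := hbsupp x y ξ hξ
    exact ⟨by rw [hsplit]; linarith, by rw [pow_succ] at hhi; linarith⟩
  have hker : ∀ x y, ‖Kker h b x y‖ₑ ≤ A (x - y) := fun x y => by
    rw [← ofReal_norm]
    exact ENNReal.ofReal_le_ofReal
      (norm_Kker_le hh (by positivity) (hb x y) (hann x y) (hbder x y))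
  have hA : ∫⁻ z, A z ≤ ENNReal.ofReal (K * Iq * C₀ * 2 ^ (-((j : ℝ) * d) / ((d : ℝ) + 1))) := by
    have hprofile := lintegral_ofReal_mul_pow_div_one_add_mul_norm_pow volume hdN
      (by positivity : 0 ≤ K * C₀ / lam) (by positivity : 0 < ρ)
    rw [finrank_euclideanSpace_fin] at hprofile
    rw [hprofile]
    refine ENNReal.ofReal_le_ofReal ?_
    calc K * C₀ / lam * Iq = K * Iq * C₀ * lam⁻¹ := by ring
      _ ≤ _ := by gcongr; exact inv_two_pow_le_two_rpow j d
  calc eLpNorm (fun x => ∫ y, Kker h b x y * f y) 2 volume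
      ≤ (∫⁻ z, A z) * eLpNorm f 2 volume :=
        eLpNorm_integral_mul_le_of_enorm_le (by fun_prop) hker hf.1
    _ ≤ _ := by gcongr

/-- **Dyadic piece estimate from the proof of Lemma A.1 of the paper**: if the amplitude
`b` is supported in the annulus `2^{j-1} ≤ ‖ξ‖ ≤ 2^{j+1}` and satisfies
`|∂_ξ^α b| ≤ C₀⟨ξ⟩^{-(|α|+1)}` for `|α| ≤ d+1`, then the associated operator satisfies
`‖T_h‖_{L²→L²} ≤ C(d)·C₀·2^{-jd/(d+1)}`, uniformly in `j ≥ 1` and `h ∈ (0,1]`. -/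
theorem stmt_11 (d : ℕ) (hd : 1 ≤ d) :
    ∃ C : ℝ, 0 < C ∧
      ∀ j : ℕ, 1 ≤ j →
      ∀ (C₀ h : ℝ), 0 < C₀ → 0 < h → h ≤ 1 →
      ∀ b : EuclideanSpace ℝ (Fin d) → EuclideanSpace ℝ (Fin d) →
          EuclideanSpace ℝ (Fin d) → ℂ,
        (∀ x y, ContDiff ℝ (d + 1 : ℕ) (b x y)) →
        (∀ x y ξ, b x y ξ ≠ 0 → (2 : ℝ) ^ (j - 1) ≤ ‖ξ‖ ∧ ‖ξ‖ ≤ (2 : ℝ) ^ (j + 1)) →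
        (∀ x y ξ, ∀ k : ℕ, k ≤ d + 1 →
          ‖iteratedFDeriv ℝ k (b x y) ξ‖ ≤
            C₀ * (1 + ‖ξ‖ ^ 2) ^ (-((k : ℝ) + 1) / 2)) →
        ∀ f : EuclideanSpace ℝ (Fin d) → ℂ, MemLp f 2 volume →
          eLpNorm (fun x => ∫ y, Kker h b x y * f y) 2 volume ≤
            ENNReal.ofReal (C * C₀ * (2 : ℝ) ^ (-((j : ℝ) * d) / ((d : ℝ) + 1))) *
              eLpNorm f 2 volume :=
  stmt_11_general d

end
end
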